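/- arXiv:math/0408250 — 6 statements merged into one kernel-verified Lean document; each statement's English description precedes it below -/
import Mathlib

section
/- Let γ₁,…,γ_n ∈ ℝ^k (n ≥ 1) be polarized by some ξ ∈ ℝ^k, and let c ∈ ℝ^k. Then for every Schwartz function φ ∈ 𝒮(ℝ^k) the integral ∫_{[0,∞)^n} φ(c + Σ_{j=1}^n s_j γ_j) ds₁⋯ds_n converges absolutely, and the map φ ↦ ∫_{[0,∞)^n} φ(c + Σ_j s_j γ_j) ds is a continuous linear functional on 𝒮(ℝ^k); that is, the convolution δ_c ∗ h_{γ₁} ∗ ⋯ ∗ h_{γ_n} is a well-defined tempered distribution on ℝ^k. -/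
open MeasureTheory Set
open scoped RealInnerProductSpace

/-
Write `F s = c + ∑ⱼ sⱼ γⱼ`. Pairing with the polarizing vector `ξ` shows that `F` grows linearly on
the orthant: `ε ‖s‖ ≤ ⟪F s - c, ξ⟫ ≤ ‖ξ‖ (‖F s‖ + ‖c‖)` with `ε = minⱼ ⟪γⱼ, ξ⟫ > 0`. Hence
`(1 + ‖F s‖)⁻ᴺ ≲ (1 + ‖s‖)⁻ᴺ` there, so the image of Lebesgue measure on the orthant under `F` has
temperate growth, and integration against a temperate measure is a continuous functional on Schwartz
space.
-/

namespace MeasureTheory.Measure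

variable {E V : Type*} [NormedAddCommGroup E] [MeasurableSpace E]
  [NormedAddCommGroup V] [MeasurableSpace V] [BorelSpace V]

instance HasTemperateGrowth.restrict (μ : Measure E) [hμ : μ.HasTemperateGrowth] (s : Set E) :
    (μ.restrict s).HasTemperateGrowth :=
  let ⟨N, hN⟩ := hμ.exists_integrable
  ⟨⟨N, hN.restrict⟩⟩

theorem HasTemperateGrowth.map {μ : Measure E} [hμ : μ.HasTemperateGrowth] {F : E → V}
    (hF : AEMeasurable F μ) {B : ℝ} (hB : ∀ᵐ x ∂μ, 1 + ‖x‖ ≤ B * (1 + ‖F x‖)) :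
    (μ.map F).HasTemperateGrowth := by
  obtain ⟨N, hN⟩ := hμ.exists_integrable
  have hcont : Continuous fun y : V => (1 + ‖y‖) ^ (-(N : ℝ)) :=
    (continuous_const.add continuous_norm).rpow_const fun y => Or.inl (by positivity : (0 : ℝ) < 1 + ‖y‖).ne'
  refine ⟨⟨N, (integrable_map_measure hcont.aestronglyMeasurable hF).2 ?_⟩⟩
  refine (hN.const_mul (B ^ N)).mono' (hcont.measurable.comp_aemeasurable hF).aestronglyMeasurable ?_
  filter_upwards [hB] with x hx
  have hx₀ : 0 < 1 + ‖x‖ := by positivity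
  have hFx₀ : 0 < 1 + ‖F x‖ := by positivity
  have hpow : (1 + ‖x‖) ^ N ≤ B ^ N * (1 + ‖F x‖) ^ N := by
    rw [← mul_pow]; exact pow_le_pow_left₀ hx₀.le hx N
  simp only [Function.comp_apply, Real.rpow_neg hFx₀.le, Real.rpow_neg hx₀.le, Real.rpow_natCast,
    norm_inv, norm_pow, Real.norm_of_nonneg hFx₀.le]
  rw [← div_eq_mul_inv, le_div_iff₀ (by positivity)]
  rwa [inv_mul_le_iff₀ (by positivity), mul_comm]

end MeasureTheory.Measure

section Polarized

variable {E ι : Type*} [NormedAddCommGroup E] [InnerProductSpace ℝ E] [Fintype ι]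
  {γ : ι → E} {ξ : E}

theorem exists_pos_mul_norm_le_inner_sum_smul (hpol : ∀ j, 0 < ⟪γ j, ξ⟫) :
    ∃ ε > 0, ∀ s : ι → ℝ, 0 ≤ s → ε * ‖s‖ ≤ ⟪∑ j, s j • γ j, ξ⟫ := by
  have hsmall : ∀ᶠ ε in nhdsWithin (0 : ℝ) (Ioi 0), ∀ j, ε ≤ ⟪γ j, ξ⟫ :=
    Filter.eventually_all.2 fun j =>
      (eventually_le_nhds (hpol j)).filter_mono nhdsWithin_le_nhds
  obtain ⟨ε, hle, hε⟩ := (hsmall.and self_mem_nhdsWithin).exists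
  refine ⟨ε, hε, fun s hs => ?_⟩
  have hnorm : ‖s‖ ≤ ∑ j, s j :=
    (pi_norm_le_iff_of_nonneg (Finset.sum_nonneg fun j _ => hs j)).2 fun i => by
      rw [Real.norm_of_nonneg (hs i)]
      exact Finset.single_le_sum (fun j _ => hs j) (Finset.mem_univ i)
  calc ε * ‖s‖ ≤ ∑ j, s j * ε := by rw [← Finset.sum_mul, mul_comm]; gcongr
    _ ≤ ∑ j, s j * ⟪γ j, ξ⟫ := by gcongr with j; exact hs j; exact hle j
    _ = ⟪∑ j, s j • γ j, ξ⟫ := by simp only [sum_inner, real_inner_smul_left]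

theorem exists_one_add_norm_le_mul_one_add_norm (hpol : ∀ j, 0 < ⟪γ j, ξ⟫) (c : E) :
    ∃ B, ∀ s : ι → ℝ, 0 ≤ s → 1 + ‖s‖ ≤ B * (1 + ‖c + ∑ j, s j • γ j‖) := by
  obtain ⟨ε, hε, hle⟩ := exists_pos_mul_norm_le_inner_sum_smul hpol
  refine ⟨1 + ‖ξ‖ * (1 + ‖c‖) / ε, fun s hs => ?_⟩
  set y := c + ∑ j, s j • γ j
  have hlin : ε * ‖s‖ ≤ ‖ξ‖ * (1 + ‖c‖) * (1 + ‖y‖) :=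
    calc ε * ‖s‖ ≤ ⟪y - c, ξ⟫ := by simpa [y] using hle s hs
      _ ≤ ‖y - c‖ * ‖ξ‖ := real_inner_le_norm _ _
      _ ≤ (‖y‖ + ‖c‖) * ‖ξ‖ := by gcongr; exact norm_sub_le _ _
      _ ≤ ‖ξ‖ * (1 + ‖c‖) * (1 + ‖y‖) := by
        nlinarith [norm_nonneg ξ, mul_nonneg (norm_nonneg ξ) (mul_nonneg (norm_nonneg c) (norm_nonneg y))]
  have : ‖s‖ ≤ ‖ξ‖ * (1 + ‖c‖) / ε * (1 + ‖y‖) := by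
    rw [div_mul_eq_mul_div, le_div_iff₀ hε]; linarith
  nlinarith [norm_nonneg y]

end Polarized

section ConeMeasure

variable {E ι : Type*} [NormedAddCommGroup E] [InnerProductSpace ℝ E] [MeasurableSpace E]
  [BorelSpace E] [Fintype ι]

/-- The measure `δ_c ∗ h_{γ₁} ∗ ⋯ ∗ h_{γ_n}`. -/
noncomputable def coneMeasure (c : E) (γ : ι → E) : Measure E :=
  (volume.restrict (Ici (0 : ι → ℝ))).map fun s => c + ∑ j, s j • γ j

theorem measurable_add_sum_smul (c : E) (γ : ι → E) :
    Measurable fun s : ι → ℝ => c + ∑ j, s j • γ j :=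
  (by fun_prop : Continuous fun s : ι → ℝ => c + ∑ j, s j • γ j).measurable

theorem hasTemperateGrowth_coneMeasure {γ : ι → E} {ξ : E} (hpol : ∀ j, 0 < ⟪γ j, ξ⟫) (c : E) :
    (coneMeasure c γ).HasTemperateGrowth := by
  obtain ⟨B, hB⟩ := exists_one_add_norm_le_mul_one_add_norm hpol c
  exact .map (measurable_add_sum_smul c γ).aemeasurable
    ((ae_restrict_iff' measurableSet_Ici).2 (.of_forall hB))

end ConeMeasure

theorem stmt_2_general (k n : ℕ)
    (γ : Fin n → EuclideanSpace ℝ (Fin k)) (ξ : EuclideanSpace ℝ (Fin k))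
    (hpol : ∀ j, 0 < ⟪γ j, ξ⟫) (c : EuclideanSpace ℝ (Fin k)) :
    (∀ φ : SchwartzMap (EuclideanSpace ℝ (Fin k)) ℂ,
      IntegrableOn (fun s : Fin n → ℝ => φ (c + ∑ j, s j • γ j))
        (Set.Ici (0 : Fin n → ℝ)) volume) ∧
    (∃ conv : SchwartzMap (EuclideanSpace ℝ (Fin k)) ℂ →L[ℂ] ℂ,
      ∀ φ : SchwartzMap (EuclideanSpace ℝ (Fin k)) ℂ,
        conv φ = ∫ s in Set.Ici (0 : Fin n → ℝ), φ (c + ∑ j, s j • γ j)) := by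
  have := hasTemperateGrowth_coneMeasure hpol c
  have hF := (measurable_add_sum_smul c γ).aemeasurable (μ := volume.restrict (Ici 0))
  refine ⟨fun φ => ?_, SchwartzMap.integralCLM ℂ (coneMeasure c γ), fun φ => ?_⟩
  · exact (integrable_map_measure φ.continuous.aestronglyMeasurable hF).1
      (φ.integrable (μ := coneMeasure c γ))
  · exact integral_map hF φ.continuous.aestronglyMeasurable

/-- Let `γ₁,…,γ_n ∈ ℝ^k` (`n ≥ 1`) be polarized by some `ξ`
(`⟪γ_j, ξ⟫ > 0` for all `j`) and let `c ∈ ℝ^k`. Then for every Schwartz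
function `φ` the integral `∫_{[0,∞)^n} φ(c + Σ_j s_j γ_j) ds` converges
absolutely, and `φ ↦ ∫_{[0,∞)^n} φ(c + Σ_j s_j γ_j) ds` is a continuous
linear functional on `𝒮(ℝ^k)`: the convolution `δ_c ∗ h_{γ₁} ∗ ⋯ ∗ h_{γ_n}`
is a well-defined tempered distribution. -/
theorem stmt_2 (k n : ℕ) (hn : 1 ≤ n)
    (γ : Fin n → EuclideanSpace ℝ (Fin k)) (ξ : EuclideanSpace ℝ (Fin k))
    (hpol : ∀ j, 0 < ⟪γ j, ξ⟫) (c : EuclideanSpace ℝ (Fin k)) :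
    (∀ φ : SchwartzMap (EuclideanSpace ℝ (Fin k)) ℂ,
      IntegrableOn (fun s : Fin n → ℝ => φ (c + ∑ j, s j • γ j))
        (Set.Ici (0 : Fin n → ℝ)) volume) ∧
    (∃ conv : SchwartzMap (EuclideanSpace ℝ (Fin k)) ℂ →L[ℂ] ℂ,
      ∀ φ : SchwartzMap (EuclideanSpace ℝ (Fin k)) ℂ,
        conv φ = ∫ s in Set.Ici (0 : Fin n → ℝ), φ (c + ∑ j, s j • γ j)) :=
  stmt_2_general k n γ ξ hpol c
end

section
/- Let γ₁,…,γ_n ∈ ℝ^k (n ≥ 1) and suppose there exist real numbers λ₁,…,λ_n ≥ 0, not all zero, with Σ_{j=1}^n λ_j γ_j = 0 (i.e., the list is not polarizable). Then for every Schwartz function φ ∈ 𝒮(ℝ^k) that is strictly positive everywhere, the integral ∫_{[0,∞)^n} φ(Σ_j s_j γ_j) ds₁⋯ds_n diverges (the integral of the nonnegative integrand equals +∞). In particular the convolution h_{γ₁} ∗ ⋯ ∗ h_{γ_n} is not well-defined in this case. -/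
open MeasureTheory Set
open scoped RealInnerProductSpace ENNReal

/-- Let `γ₁,…,γ_n ∈ ℝ^k` (`n ≥ 1`) and suppose there are
`λ₁,…,λ_n ≥ 0`, not all zero, with `Σ_j λ_j γ_j = 0` (the list is not
polarizable). Then for every Schwartz function `φ` which is strictly positive
everywhere (real-valued with positive real part), the integral
`∫_{[0,∞)^n} φ(Σ_j s_j γ_j) ds` diverges: the integral of the nonnegative
integrand equals `+∞`.  In particular `h_{γ₁} ∗ ⋯ ∗ h_{γ_n}` is not
well-defined in this case. -/
theorem stmt_3 (k n : ℕ) (hn : 1 ≤ n)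
    (γ : Fin n → EuclideanSpace ℝ (Fin k))
    (lam : Fin n → ℝ) (hlam : ∀ j, 0 ≤ lam j) (hlamne : lam ≠ 0)
    (hrel : ∑ j, lam j • γ j = 0)
    (φ : SchwartzMap (EuclideanSpace ℝ (Fin k)) ℂ)
    (hpos : ∀ x, 0 < (φ x).re) (hreal : ∀ x, (φ x).im = 0) :
    ∫⁻ s in Set.Ici (0 : Fin n → ℝ),
      ENNReal.ofReal ((φ (∑ j, s j • γ j)).re) = ∞ := by
  classical
  obtain ⟨j0, hj0⟩ : ∃ j, 0 < lam j := by
    by_contra h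
    push_neg at h
    exact hlamne (funext fun j => le_antisymm (h j) (hlam j))
  set c : ℝ := (φ 0).re / 2 with hcdef
  have hc0 : 0 < c := half_pos (hpos 0)
  have hcont : Continuous fun x : EuclideanSpace ℝ (Fin k) => (φ x).re :=
    Complex.continuous_re.comp φ.continuous
  have hopen : IsOpen {x : EuclideanSpace ℝ (Fin k) | c < (φ x).re} :=
    isOpen_lt continuous_const hcont
  have hmem : (0 : EuclideanSpace ℝ (Fin k)) ∈ {x | c < (φ x).re} := by
    simp only [mem_setOf_eq, hcdef]
    linarith [hpos 0]
  obtain ⟨r, hr0, hball⟩ := Metric.isOpen_iff.mp hopen 0 hmem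
  set S : ℝ := ∑ j, ‖γ j‖ with hSdef
  have hS0 : 0 ≤ S := Finset.sum_nonneg fun j _ => norm_nonneg _
  set δ : ℝ := r / (2 * (S + 1)) with hδdef
  have hδ0 : 0 < δ := by positivity
  have hδS : δ * S < r := by
    rw [hδdef, div_mul_eq_mul_div, div_lt_iff₀ (by linarith)]
    nlinarith
  set t : ℕ → ℝ := fun m => m * (δ + 1) / lam j0 with htdef
  set B : ℕ → Set (Fin n → ℝ) :=
    fun m => Set.univ.pi fun j => Icc (t m * lam j) (t m * lam j + δ) with hBdef
  have htlam : ∀ m : ℕ, t m * lam j0 = m * (δ + 1) := fun m =>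
    div_mul_cancel₀ _ (ne_of_gt hj0)
  have ht0 : ∀ m : ℕ, 0 ≤ t m := fun m => by
    apply div_nonneg _ hj0.le
    positivity
  have hBmeas : ∀ m, MeasurableSet (B m) := fun m =>
    MeasurableSet.univ_pi fun j => measurableSet_Icc
  have hBsub : ∀ m, B m ⊆ Set.Ici (0 : Fin n → ℝ) := by
    intro m s hs
    rw [Set.mem_Ici]
    intro j
    have h1 := hs j (mem_univ j)
    have h2 : 0 ≤ t m * lam j := mul_nonneg (ht0 m) (hlam j)
    exact le_trans h2 h1.1
  have hpoint : ∀ m, ∀ s ∈ B m, c ≤ (φ (∑ j, s j • γ j)).re := by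
    intro m s hs
    have key : ∑ j, s j • γ j = ∑ j, (s j - t m * lam j) • γ j := by
      have h1 : ∑ j, ((s j - t m * lam j) • γ j + (t m * lam j) • γ j)
          = ∑ j, s j • γ j := by
        refine Finset.sum_congr rfl fun j _ => ?_
        rw [← add_smul, sub_add_cancel]
      have h2 : ∑ j, (t m * lam j) • γ j = t m • ∑ j, lam j • γ j := by
        rw [Finset.smul_sum]
        exact Finset.sum_congr rfl fun j _ => mul_smul _ _ _
      rw [← h1, Finset.sum_add_distrib, h2, hrel, smul_zero, add_zero]
    have hnorm : ‖∑ j, (s j - t m * lam j) • γ j‖ < r := by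
      calc ‖∑ j, (s j - t m * lam j) • γ j‖
          ≤ ∑ j, ‖(s j - t m * lam j) • γ j‖ := norm_sum_le _ _
        _ ≤ ∑ j, δ * ‖γ j‖ := by
            refine Finset.sum_le_sum fun j _ => ?_
            rw [norm_smul, Real.norm_eq_abs]
            refine mul_le_mul_of_nonneg_right ?_ (norm_nonneg _)
            rw [abs_le]
            have h3 := hs j (mem_univ j)
            constructor
            · linarith [h3.1, hδ0.le]
            · linarith [h3.2]
        _ = δ * S := by rw [← Finset.mul_sum]
        _ < r := hδS
    have hb : ∑ j, (s j - t m * lam j) • γ j ∈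
        Metric.ball (0 : EuclideanSpace ℝ (Fin k)) r := by
      simpa [Metric.mem_ball, dist_zero_right] using hnorm
    rw [key]
    exact le_of_lt (hball hb)
  have hdisj : Pairwise (Function.onFun Disjoint B) := by
    intro m m' hmm'
    refine Set.disjoint_left.mpr fun s hsm hsm' => ?_
    have h1 := hsm j0 (mem_univ j0)
    have h2 := hsm' j0 (mem_univ j0)
    simp only [mem_Icc, htlam] at h1 h2
    rcases hmm'.lt_or_gt with h | h
    · have h3 : (m : ℝ) + 1 ≤ m' := by exact_mod_cast h
      nlinarith [h1.2, h2.1, mul_le_mul_of_nonneg_right h3 (by linarith : (0:ℝ) ≤ δ + 1)]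
    · have h3 : (m' : ℝ) + 1 ≤ m := by exact_mod_cast h
      nlinarith [h1.1, h2.2, mul_le_mul_of_nonneg_right h3 (by linarith : (0:ℝ) ≤ δ + 1)]
  have hvol : ∀ m, volume (B m) = ENNReal.ofReal δ ^ n := by
    intro m
    rw [show B m = Set.univ.pi fun j => Icc (t m * lam j) (t m * lam j + δ) from rfl,
      volume_pi_pi]
    simp [Real.volume_Icc]
  have h1 : ∀ m : ℕ, ENNReal.ofReal c * ENNReal.ofReal δ ^ n ≤
      ∫⁻ s in B m, ENNReal.ofReal ((φ (∑ j, s j • γ j)).re) := by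
    intro m
    calc ENNReal.ofReal c * ENNReal.ofReal δ ^ n
        = ∫⁻ _ in B m, ENNReal.ofReal c := by rw [setLIntegral_const, hvol]
      _ ≤ ∫⁻ s in B m, ENNReal.ofReal ((φ (∑ j, s j • γ j)).re) :=
          setLIntegral_mono' (hBmeas m) fun s hs =>
            ENNReal.ofReal_le_ofReal (hpoint m s hs)
  have hsum : ∑' _ : ℕ, ENNReal.ofReal c * ENNReal.ofReal δ ^ n = ∞ :=
    ENNReal.tsum_const_eq_top_of_ne_zero
      (mul_ne_zero (by simp [ENNReal.ofReal_eq_zero]; linarith)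
        (pow_ne_zero _ (by simp [ENNReal.ofReal_eq_zero]; linarith)))
  have hle : ∑' _ : ℕ, ENNReal.ofReal c * ENNReal.ofReal δ ^ n ≤
      ∫⁻ s in Set.Ici (0 : Fin n → ℝ),
        ENNReal.ofReal ((φ (∑ j, s j • γ j)).re) := by
    calc ∑' _ : ℕ, ENNReal.ofReal c * ENNReal.ofReal δ ^ n
        ≤ ∑' m : ℕ, ∫⁻ s in B m, ENNReal.ofReal ((φ (∑ j, s j • γ j)).re) :=
          ENNReal.tsum_le_tsum h1
      _ = ∫⁻ s in ⋃ m, B m, ENNReal.ofReal ((φ (∑ j, s j • γ j)).re) :=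
          (lintegral_iUnion hBmeas hdisj _).symm
      _ ≤ _ := lintegral_mono_set (iUnion_subset hBsub)
  exact top_le_iff.mp (hsum ▸ hle)
end

section
/- Let γ₁,…,γ_n ∈ ℝ^k (n ≥ 1) be polarized by some ξ ∈ ℝ^k, let c ∈ ℝ^k, and let μ : ℂ^n → ℝ^k be the linear moment map μ(z₁,…,z_n) = c + (1/2) Σ_{j=1}^n |z_j|² γ_j. Then for every Schwartz function φ ∈ 𝒮(ℝ^k), ∫_{ℂ^n} φ(μ(z)) dz = (2π)^n ∫_{[0,∞)^n} φ(c + Σ_{j=1}^n s_j γ_j) ds, where dz is Lebesgue measure on ℂ^n ≅ ℝ^{2n}, and both integrals converge absolutely. In other words, the pushforward of Lebesgue measure on ℂ^n under μ is the distribution (2π)^n · δ_c ∗ h_{γ₁} ∗ ⋯ ∗ h_{γ_n}. -/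
open MeasureTheory Set
open scoped RealInnerProductSpace Real NNReal ENNReal


lemma map_halfNormSq :
    Measure.map (fun z : ℂ => ‖z‖ ^ 2 / 2) volume
      = ((2 * π).toNNReal : ℝ≥0) • volume.restrict (Ici (0 : ℝ)) := by
  haveI : IsLocallyFiniteMeasure (volume.restrict (Ici (0 : ℝ))) :=
    Measure.isLocallyFiniteMeasure_of_le Measure.restrict_le_self
  have hmeas : Measurable fun z : ℂ => ‖z‖ ^ 2 / 2 :=
    (measurable_norm.pow_const 2).div_const 2
  refine (Real.measure_ext_Ioo_rat fun a b => ?_).symm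
  rw [Measure.map_apply hmeas measurableSet_Ioo, Measure.coe_nnreal_smul_apply,
    Measure.restrict_apply measurableSet_Ioo]
  have hpi : ((NNReal.pi : ℝ≥0∞)) = ENNReal.ofReal π := by
    rw [← ENNReal.ofReal_coe_nnreal, NNReal.coe_real_pi]
  have htn : (((2 * π).toNNReal : ℝ≥0) : ℝ≥0∞) = ENNReal.ofReal (2 * π) := rfl
  rcases le_or_gt (b : ℝ) 0 with hb | hb
  · have h1 : (fun z : ℂ => ‖z‖ ^ 2 / 2) ⁻¹' Ioo (a : ℝ) (b : ℝ) = ∅ := by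
      ext z
      simp only [mem_preimage, mem_Ioo, mem_empty_iff_false, iff_false, not_and]
      intro _
      nlinarith [sq_nonneg ‖z‖]
    have h2 : Ioo (a : ℝ) (b : ℝ) ∩ Ici 0 = ∅ := by
      ext x
      simp only [mem_inter_iff, mem_Ioo, mem_Ici, mem_empty_iff_false, iff_false, not_and]
      rintro ⟨_, hx⟩ hx0
      linarith
    rw [h1, h2]
    simp
  · rcases lt_or_ge (a : ℝ) 0 with ha | ha
    · have h1 : (fun z : ℂ => ‖z‖ ^ 2 / 2) ⁻¹' Ioo (a : ℝ) (b : ℝ)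
          = Metric.ball (0 : ℂ) (Real.sqrt (2 * b)) := by
        ext z
        simp only [mem_preimage, mem_Ioo, Metric.mem_ball, dist_zero_right]
        rw [show (‖z‖ < Real.sqrt (2 * b)) ↔ ‖z‖ ^ 2 < 2 * b from Real.lt_sqrt (norm_nonneg z)]
        constructor
        · rintro ⟨_, h⟩; linarith
        · intro h
          exact ⟨by nlinarith [sq_nonneg ‖z‖], by linarith⟩
      have h2 : Ioo (a : ℝ) (b : ℝ) ∩ Ici 0 = Ico 0 (b : ℝ) := by
        ext x
        simp only [mem_inter_iff, mem_Ioo, mem_Ici, mem_Ico]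
        constructor
        · rintro ⟨⟨_, h⟩, h0⟩; exact ⟨h0, h⟩
        · rintro ⟨h0, h⟩; exact ⟨⟨by linarith, h⟩, h0⟩
      rw [h1, h2, Complex.volume_ball, Real.volume_Ico,
        ← ENNReal.ofReal_pow (Real.sqrt_nonneg _),
        Real.sq_sqrt (show (0 : ℝ) ≤ 2 * b by linarith), htn, hpi,
        ← ENNReal.ofReal_mul (show (0 : ℝ) ≤ 2 * (b : ℝ) by linarith),
        ← ENNReal.ofReal_mul (show (0 : ℝ) ≤ 2 * π by positivity)]
      congr 1
      ring
    · rcases lt_or_ge (a : ℝ) (b : ℝ) with hab | hab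
      · have hsq : Real.sqrt (2 * a) < Real.sqrt (2 * b) :=
          Real.sqrt_lt_sqrt (by linarith) (by linarith)
        have h1 : (fun z : ℂ => ‖z‖ ^ 2 / 2) ⁻¹' Ioo (a : ℝ) (b : ℝ)
            = Metric.ball (0 : ℂ) (Real.sqrt (2 * b)) \
                Metric.closedBall (0 : ℂ) (Real.sqrt (2 * a)) := by
          ext z
          simp only [mem_preimage, mem_Ioo, mem_diff, Metric.mem_ball, Metric.mem_closedBall,
            dist_zero_right, not_le]
          constructor
          · rintro ⟨h₁, h₂⟩
            refine ⟨(Real.lt_sqrt (norm_nonneg z)).2 (by linarith), ?_⟩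
            calc Real.sqrt (2 * a) < Real.sqrt (‖z‖ ^ 2) :=
                  Real.sqrt_lt_sqrt (by linarith) (by linarith)
              _ = ‖z‖ := Real.sqrt_sq (norm_nonneg z)
          · rintro ⟨h₁, h₂⟩
            have hb2 : ‖z‖ ^ 2 < 2 * b := (Real.lt_sqrt (norm_nonneg z)).1 h₁
            have hs2 := Real.sq_sqrt (show (0 : ℝ) ≤ 2 * a by linarith)
            have ha2 : 2 * (a : ℝ) < ‖z‖ ^ 2 := by nlinarith [Real.sqrt_nonneg (2 * (a : ℝ))]
            exact ⟨by linarith, by linarith⟩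
        have h2 : Ioo (a : ℝ) (b : ℝ) ∩ Ici 0 = Ioo (a : ℝ) (b : ℝ) :=
          inter_eq_left.2 fun x hx => le_of_lt (lt_of_le_of_lt ha hx.1)
        rw [h1, h2,
          measure_diff (Metric.closedBall_subset_ball hsq)
            measurableSet_closedBall.nullMeasurableSet measure_closedBall_lt_top.ne,
          Complex.volume_ball, Complex.volume_closedBall, Real.volume_Ioo,
          ← ENNReal.ofReal_pow (Real.sqrt_nonneg _), ← ENNReal.ofReal_pow (Real.sqrt_nonneg _),
          Real.sq_sqrt (show (0 : ℝ) ≤ 2 * b by linarith),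
          Real.sq_sqrt (show (0 : ℝ) ≤ 2 * a by linarith), htn, hpi,
          ← ENNReal.ofReal_mul (show (0 : ℝ) ≤ 2 * (b : ℝ) by linarith),
          ← ENNReal.ofReal_mul (show (0 : ℝ) ≤ 2 * (a : ℝ) by linarith),
          ← ENNReal.ofReal_mul (show (0 : ℝ) ≤ 2 * π by positivity),
          ← ENNReal.ofReal_sub _ (show (0 : ℝ) ≤ 2 * (a : ℝ) * π by positivity)]
        congr 1
        ring
      · rw [Set.Ioo_eq_empty (by exact_mod_cast not_lt.2 hab)]
        simp

lemma map_pi (n : ℕ) :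
    Measure.map (fun (z : Fin n → ℂ) (i : Fin n) => ‖z i‖ ^ 2 / 2) volume
      = ((2 * π).toNNReal ^ n : ℝ≥0) • (volume : Measure (Fin n → ℝ)).restrict (Ici 0) := by
  have hT : Measurable fun z : ℂ => ‖z‖ ^ 2 / 2 :=
    (measurable_norm.pow_const 2).div_const 2
  have h1 : Measure.map (fun (z : Fin n → ℂ) (i : Fin n) => ‖z i‖ ^ 2 / 2) volume
      = Measure.pi fun _ : Fin n => ((2 * π).toNNReal : ℝ≥0) • volume.restrict (Ici (0 : ℝ)) := by
    refine (Measure.pi_eq fun s hs => ?_).symm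
    have hF : Measurable fun (z : Fin n → ℂ) (i : Fin n) => ‖z i‖ ^ 2 / 2 :=
      measurable_pi_lambda _ fun i => hT.comp (measurable_pi_apply i)
    rw [Measure.map_apply hF (MeasurableSet.univ_pi hs)]
    have hpre : (fun (z : Fin n → ℂ) (i : Fin n) => ‖z i‖ ^ 2 / 2) ⁻¹' univ.pi s
        = univ.pi fun i => (fun z : ℂ => ‖z‖ ^ 2 / 2) ⁻¹' s i := by
      ext z
      simp [Set.mem_pi]
    rw [hpre, volume_pi, Measure.pi_pi]
    exact Finset.prod_congr rfl fun i _ => by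
      rw [← map_halfNormSq, Measure.map_apply hT (hs i)]
  have h2 : (Measure.pi fun _ : Fin n => ((2 * π).toNNReal : ℝ≥0) • volume.restrict (Ici (0 : ℝ)))
      = ((2 * π).toNNReal ^ n : ℝ≥0) •
          Measure.pi fun _ : Fin n => volume.restrict (Ici (0 : ℝ)) := by
    refine Measure.pi_eq fun s hs => ?_
    rw [Measure.coe_nnreal_smul_apply, Measure.pi_pi]
    simp only [Measure.coe_nnreal_smul_apply]
    rw [Finset.prod_mul_distrib, Finset.prod_const, Finset.card_univ, Fintype.card_fin,
      ENNReal.coe_pow]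
  have h3 : (Measure.pi fun _ : Fin n => volume.restrict (Ici (0 : ℝ)))
      = (volume : Measure (Fin n → ℝ)).restrict (Ici 0) := by
    refine Measure.pi_eq fun s hs => ?_
    rw [Measure.restrict_apply (MeasurableSet.univ_pi hs)]
    have hint : univ.pi s ∩ Ici (0 : Fin n → ℝ) = univ.pi fun i => s i ∩ Ici 0 := by
      ext x
      simp only [mem_inter_iff, Set.mem_pi, mem_univ, forall_true_left, mem_Ici, Pi.le_def,
        true_implies]
      constructor
      · rintro ⟨h₁, h₂⟩ i
        exact ⟨h₁ i, h₂ i⟩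
      · intro h
        exact ⟨fun i => (h i).1, fun i => (h i).2⟩
    rw [hint, volume_pi, Measure.pi_pi]
    exact Finset.prod_congr rfl fun i _ => (Measure.restrict_apply (hs i)).symm
  rw [h1, h2, h3]

set_option maxHeartbeats 1000000 in
/-- Let `γ₁,…,γ_n ∈ ℝ^k` (`n ≥ 1`) be polarized by some `ξ`,
let `c ∈ ℝ^k`, and let `μ : ℂ^n → ℝ^k` be the linear moment map
`μ(z) = c + (1/2) Σ_j |z_j|² γ_j`.  Then for every Schwartz function `φ`,
`∫_{ℂ^n} φ(μ(z)) dz = (2π)^n ∫_{[0,∞)^n} φ(c + Σ_j s_j γ_j) ds`,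
and both integrals converge absolutely: the pushforward of Lebesgue measure
on `ℂ^n` under `μ` is `(2π)^n · δ_c ∗ h_{γ₁} ∗ ⋯ ∗ h_{γ_n}`. -/
theorem stmt_5 (k n : ℕ) (hn : 1 ≤ n)
    (γ : Fin n → EuclideanSpace ℝ (Fin k)) (ξ : EuclideanSpace ℝ (Fin k))
    (hpol : ∀ j, 0 < ⟪γ j, ξ⟫) (c : EuclideanSpace ℝ (Fin k))
    (φ : SchwartzMap (EuclideanSpace ℝ (Fin k)) ℂ) :
    Integrable
      (fun z : Fin n → ℂ =>
        φ (c + (1 / 2 : ℝ) • ∑ j, (‖z j‖ ^ 2) • γ j)) volume ∧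
    IntegrableOn (fun s : Fin n → ℝ => φ (c + ∑ j, s j • γ j))
      (Set.Ici (0 : Fin n → ℝ)) volume ∧
    ∫ z : Fin n → ℂ, φ (c + (1 / 2 : ℝ) • ∑ j, (‖z j‖ ^ 2) • γ j) =
      (((2 * π) ^ n : ℝ) : ℂ) *
        ∫ s in Set.Ici (0 : Fin n → ℝ), φ (c + ∑ j, s j • γ j) := by
  haveI : Nonempty (Fin n) := ⟨⟨0, hn⟩⟩
  -- notation
  set f : (Fin n → ℝ) → ℂ := fun s => φ (c + ∑ j, s j • γ j) with hfdef
  set F : (Fin n → ℂ) → (Fin n → ℝ) := fun z i => ‖z i‖ ^ 2 / 2 with hFdef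
  have hFm : Measurable F :=
    measurable_pi_lambda _ fun i =>
      ((measurable_norm.pow_const 2).div_const 2).comp (measurable_pi_apply i)
  have hfc : Continuous f := by
    refine φ.continuous.comp ?_
    exact continuous_const.add
      (continuous_finset_sum _ fun j _ => (continuous_apply j).smul continuous_const)
  -- Schwartz decay bounds
  obtain ⟨C₀, hC₀pos, hC₀⟩ := φ.decay 0 0
  obtain ⟨C₁, hC₁pos, hC₁⟩ := φ.decay (2 * n) 0
  have hφb : ∀ x, (1 + ‖x‖ ^ (2 * n)) * ‖φ x‖ ≤ C₀ + C₁ := by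
    intro x
    have h0 := hC₀ x
    have h1 := hC₁ x
    rw [norm_iteratedFDeriv_zero] at h0 h1
    simp only [pow_zero, one_mul] at h0
    nlinarith [norm_nonneg (φ x)]
  -- geometry of the polarization
  have hξ : (0 : ℝ) < ‖ξ‖ := by
    rcases eq_or_ne ξ 0 with h | h
    · exfalso
      have := hpol ⟨0, hn⟩
      rw [h, inner_zero_right] at this
      exact lt_irrefl _ this
    · exact norm_pos_iff.2 h
  set b' : ℝ := Finset.univ.inf' Finset.univ_nonempty fun j : Fin n => ⟪γ j, ξ⟫ with hb'def
  have hb' : 0 < b' := (Finset.lt_inf'_iff _).2 fun j _ => hpol j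
  have hb'le : ∀ j, b' ≤ ⟪γ j, ξ⟫ := fun j => Finset.inf'_le _ (Finset.mem_univ j)
  set a : ℝ := ⟪c, ξ⟫ / ‖ξ‖ with hadef
  set β : ℝ := b' / ‖ξ‖ with hβdef
  have hβ : 0 < β := div_pos hb' hξ
  set K : ℝ := (1 + |a| + β) / β with hKdef
  have hK0 : 0 < K := by positivity
  -- pointwise 2^m bound
  have h2bd : ∀ r : ℝ, 0 ≤ r → (1 + r) ^ (2 * n) ≤ 2 ^ (2 * n) * (1 + r ^ (2 * n)) := by
    intro r hr
    rcases le_total r 1 with h | h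
    · calc (1 + r) ^ (2 * n) ≤ 2 ^ (2 * n) := by
            refine pow_le_pow_left₀ (by positivity) (by linarith) _
        _ ≤ 2 ^ (2 * n) * (1 + r ^ (2 * n)) := by
            refine le_mul_of_one_le_right (by positivity) ?_
            nlinarith [pow_nonneg hr (2 * n)]
    · calc (1 + r) ^ (2 * n) ≤ (2 * r) ^ (2 * n) := by
            refine pow_le_pow_left₀ (by positivity) (by linarith) _
        _ = 2 ^ (2 * n) * r ^ (2 * n) := mul_pow _ _ _
        _ ≤ 2 ^ (2 * n) * (1 + r ^ (2 * n)) := by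
            refine mul_le_mul_of_nonneg_left (by linarith) (by positivity)
  -- key domination on Ici 0
  set D : ℝ := (2 * K) ^ (2 * n) * (C₀ + C₁) with hDdef
  have key : ∀ s ∈ Ici (0 : Fin n → ℝ), ‖f s‖ ≤ D * ∏ j, (1 + (s j) ^ 2)⁻¹ := by
    intro s hs
    have hs' : ∀ j, 0 ≤ s j := fun j => hs j
    set x : EuclideanSpace ℝ (Fin k) := c + ∑ j, s j • γ j with hxdef
    set t : ℝ := ∑ j, s j with htdef
    have ht0 : 0 ≤ t := Finset.sum_nonneg fun j _ => hs' j
    have hsjt : ∀ j, s j ≤ t :=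
      fun j => Finset.single_le_sum (fun i _ => hs' i) (Finset.mem_univ j)
    have hinner : ⟪x, ξ⟫ = ⟪c, ξ⟫ + ∑ j, s j * ⟪γ j, ξ⟫ := by
      rw [hxdef, inner_add_left, sum_inner]
      simp_rw [real_inner_smul_left]
    have hsum : b' * t ≤ ∑ j, s j * ⟪γ j, ξ⟫ := by
      rw [htdef, Finset.mul_sum]
      refine Finset.sum_le_sum fun j _ => ?_
      rw [mul_comm]
      exact mul_le_mul_of_nonneg_left (hb'le j) (hs' j)
    have hxnorm : a + β * t ≤ ‖x‖ := by
      have h₁ : ⟪x, ξ⟫ ≤ ‖x‖ * ‖ξ‖ := real_inner_le_norm x ξ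
      have h₂ : ⟪c, ξ⟫ + b' * t ≤ ⟪x, ξ⟫ := by rw [hinner]; linarith
      calc a + β * t = (⟪c, ξ⟫ + b' * t) / ‖ξ‖ := by
            rw [hadef, hβdef]; ring
        _ ≤ ⟪x, ξ⟫ / ‖ξ‖ := by gcongr
        _ ≤ ‖x‖ := by rw [div_le_iff₀ hξ]; exact h₁
    have hKt : 1 + t ≤ K * (1 + ‖x‖) := by
      have hx0 : 0 ≤ ‖x‖ := norm_nonneg x
      rw [hKdef, div_mul_eq_mul_div, le_div_iff₀ hβ]
      nlinarith [abs_nonneg a, neg_abs_le a, mul_nonneg (abs_nonneg a) hx0,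
        mul_nonneg hβ.le hx0]
    have hprod : ∏ j, (1 + (s j) ^ 2) ≤ (1 + t) ^ (2 * n) := by
      have hc : (1 + t) ^ (2 * n) = ∏ _j : Fin n, (1 + t) ^ 2 := by
        rw [Finset.prod_const, Finset.card_univ, Fintype.card_fin, ← pow_mul]
      rw [hc]
      refine Finset.prod_le_prod (fun j _ => by positivity) fun j _ => ?_
      nlinarith [hsjt j, hs' j, ht0]
    have hPpos : (0 : ℝ) < ∏ j, (1 + (s j) ^ 2) :=
      Finset.prod_pos fun j _ => by positivity
    have hfsx : ‖f s‖ = ‖φ x‖ := rfl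
    rw [hfsx, Finset.prod_inv_distrib, ← div_eq_mul_inv, le_div_iff₀ hPpos]
    calc ‖φ x‖ * ∏ j, (1 + (s j) ^ 2)
        ≤ ‖φ x‖ * (1 + t) ^ (2 * n) :=
          mul_le_mul_of_nonneg_left hprod (norm_nonneg _)
      _ ≤ ‖φ x‖ * (K * (1 + ‖x‖)) ^ (2 * n) :=
          mul_le_mul_of_nonneg_left (pow_le_pow_left₀ (by positivity) hKt _) (norm_nonneg _)
      _ = K ^ (2 * n) * ((1 + ‖x‖) ^ (2 * n) * ‖φ x‖) := by rw [mul_pow]; ring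
      _ ≤ K ^ (2 * n) * ((2 ^ (2 * n) * (1 + ‖x‖ ^ (2 * n))) * ‖φ x‖) := by
          refine mul_le_mul_of_nonneg_left
            (mul_le_mul_of_nonneg_right (h2bd _ (norm_nonneg x)) (norm_nonneg _))
            (by positivity)
      _ = (2 * K) ^ (2 * n) * ((1 + ‖x‖ ^ (2 * n)) * ‖φ x‖) := by rw [mul_pow]; ring
      _ ≤ (2 * K) ^ (2 * n) * (C₀ + C₁) :=
          mul_le_mul_of_nonneg_left (hφb x) (by positivity)
  -- integrable dominating function
  have hg : Integrable (fun s : Fin n → ℝ => D * ∏ j, (1 + (s j) ^ 2)⁻¹) volume := by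
    refine Integrable.const_mul ?_ D
    exact Integrable.fintype_prod (f := fun (_ : Fin n) (x : ℝ) => (1 + x ^ 2)⁻¹)
      fun i => integrable_inv_one_add_sq
  have hmeasIci : MeasurableSet (Ici (0 : Fin n → ℝ)) := measurableSet_Ici
  have hIntOn : IntegrableOn f (Ici 0) volume :=
    Integrable.mono' hg.integrableOn hfc.aestronglyMeasurable.restrict
      ((ae_restrict_iff' hmeasIci).2 (ae_of_all _ key))
  -- transfer through the pushforward
  have hmap := map_pi n
  have hfmm : AEStronglyMeasurable f (Measure.map F volume) := hfc.aestronglyMeasurable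
  have hIntMap : Integrable f (Measure.map F volume) := by
    rw [hFdef, hmap]
    exact hIntOn.smul_measure_nnreal
  have hIntC : Integrable (f ∘ F) volume := hIntMap.comp_measurable hFm
  have hcomp : (fun z : Fin n → ℂ => φ (c + (1 / 2 : ℝ) • ∑ j, (‖z j‖ ^ 2) • γ j))
      = f ∘ F := by
    funext z
    simp only [Function.comp_apply, hfdef, hFdef]
    congr 2
    rw [Finset.smul_sum]
    refine Finset.sum_congr rfl fun j _ => ?_
    rw [smul_smul]
    congr 1
    ring
  refine ⟨by rw [hcomp]; exact hIntC, hIntOn, ?_⟩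
  have h2π : (0 : ℝ) ≤ 2 * π := by positivity
  calc ∫ z : Fin n → ℂ, φ (c + (1 / 2 : ℝ) • ∑ j, (‖z j‖ ^ 2) • γ j)
      = ∫ z : Fin n → ℂ, f (F z) := by rw [hcomp]; rfl
    _ = ∫ x, f x ∂(Measure.map F volume) :=
        (integral_map hFm.aemeasurable hfmm).symm
    _ = (((2 * π).toNNReal ^ n : ℝ≥0) : ℝ) •
          ∫ s in Ici (0 : Fin n → ℝ), f s := by
        rw [hFdef, hmap, integral_smul_nnreal_measure, NNReal.smul_def]
    _ = (((2 * π) ^ n : ℝ) : ℂ) * ∫ s in Ici (0 : Fin n → ℝ), f s := by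
        rw [Complex.real_smul]
        congr 2
        push_cast [Real.coe_toNNReal _ h2π]
        ring
end

section
/- Let γ₁,…,γ_n ∈ ℝ^k (n ≥ 1), let c ∈ ℝ^k, and let μ : ℂ^n → ℝ^k be the map μ(z₁,…,z_n) = c + (1/2) Σ_{j=1}^n |z_j|² γ_j. Then μ is a proper map (preimages of compact sets are compact) if and only if there exists ξ ∈ ℝ^k with ⟨γ_j, ξ⟩ > 0 for every j, i.e., if and only if the list of weights γ₁,…,γ_n is polarized by some ξ. -/
/-!
If `ξ` polarizes the weights, then `⟪μ z, ξ⟫ = ⟪c, ξ⟫ + ½ Σ ⟪γ_j, ξ⟫ |z_j|²` is a positive definite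
quadratic function of `z` plus a constant, so it tends to `+∞` at infinity; a map whose composite
with a continuous real function is proper is itself proper. Conversely, if no `ξ` polarizes the
weights, Gordan's alternative (Hahn–Banach separation of `0` from the convex hull of the `γ_j`)
gives `t ≥ 0`, `t ≠ 0` with `Σ t_j γ_j = 0`. Then `z_j = √t_j` is a nonzero point of the fibre
`μ⁻¹(c)`, and so is the whole real line through it, since `μ(r z) - c = r² (μ z - c)`; so the
fibre is not compact.
-/

open Filter Set Topology
open scoped RealInnerProductSpace

section Gordan

variable {ι E : Type*}

theorem zero_mem_convexHull_range_of_not_exists_inner_pos [Finite ι] [NormedAddCommGroup E]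
    [InnerProductSpace ℝ E] [CompleteSpace E] {γ : ι → E}
    (h : ¬ ∃ ξ : E, ∀ j, 0 < ⟪γ j, ξ⟫) : (0 : E) ∈ convexHull ℝ (range γ) := by
  by_contra h0
  obtain ⟨f, u, hf0, hfγ⟩ := geometric_hahn_banach_point_closed (convex_convexHull ℝ _)
    ((finite_range γ).isClosed_convexHull (𝕜 := ℝ)) h0
  refine h ⟨(InnerProductSpace.toDual ℝ E).symm f, fun j => ?_⟩
  rw [real_inner_comm, InnerProductSpace.toDual_symm_apply]
  have := hfγ _ (subset_convexHull ℝ _ (mem_range_self j))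
  rw [map_zero] at hf0
  linarith

theorem exists_nonneg_ne_zero_sum_smul_eq_zero [Fintype ι] [AddCommGroup E] [Module ℝ E]
    {γ : ι → E} (h : (0 : E) ∈ convexHull ℝ (range γ)) :
    ∃ t : ι → ℝ, (∀ j, 0 ≤ t j) ∧ t ≠ 0 ∧ ∑ j, t j • γ j = 0 := by
  classical
  rw [convexHull_range_eq_exists_affineCombination] at h
  obtain ⟨s, w, hw0, hw1, hcomb⟩ := h
  rw [Finset.affineCombination_eq_linear_combination _ _ _ hw1] at hcomb
  refine ⟨(s : Set ι).indicator w, fun j => ?_, fun ht => ?_, ?_⟩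
  · by_cases hj : j ∈ s <;> simp [hj, hw0]
  · have hw : ∀ i ∈ s, w i = 0 := fun i hi => by simpa [hi] using congrFun ht i
    rw [Finset.sum_eq_zero hw] at hw1
    exact zero_ne_one hw1
  · rw [← hcomb, ← Finset.sum_indicator_subset _ s.subset_univ]
    simp only [Set.indicator_smul_apply_left]

end Gordan

theorem isProperMap_of_tendsto_comp_atTop {X Y : Type*} [TopologicalSpace X] [TopologicalSpace Y]
    [T2Space Y] {f : X → Y} {ℓ : Y → ℝ} (hf : Continuous f) (hℓ : Continuous ℓ)
    (h : Tendsto (ℓ ∘ f) (cocompact X) atTop) : IsProperMap f :=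
  isProperMap_of_comp_of_t2 hf hℓ <| isProperMap_iff_tendsto_cocompact.2
    ⟨hℓ.comp hf, h.mono_right atTop_le_cocompact⟩

theorem not_isProperMap_of_comp_eq_const {X Y Z : Type*} [TopologicalSpace X]
    [TopologicalSpace Y] [TopologicalSpace Z] [NoncompactSpace Z] {f : X → Y} {g : Z → X}
    (hg : IsClosedEmbedding g) {y : Y} (h : ∀ r, f (g r) = y) : ¬ IsProperMap f := by
  intro hf
  have hK := (hf.comp hg.isProperMap).isCompact_preimage (isCompact_singleton (x := y))
  rw [show (f ∘ g) ⁻¹' {y} = univ from eq_univ_of_forall h] at hK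
  exact noncompact_univ Z hK

theorem tendsto_sum_mul_norm_sq_cocompact_atTop {ι F : Type*} [Fintype ι]
    [NormedAddCommGroup F] [ProperSpace F] {a : ι → ℝ} (ha : ∀ j, 0 < a j) :
    Tendsto (fun z : ι → F => ∑ j, a j * ‖z j‖ ^ 2) (cocompact (ι → F)) atTop := by
  rw [← coprodᵢ_cocompact]
  refine tendsto_iSup.2 fun j => ?_
  have hj : Tendsto (fun z : ι → F => a j * ‖z j‖ ^ 2)
      (comap (Function.eval j) (cocompact F)) atTop :=
    ((tendsto_pow_atTop two_ne_zero).comp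
      (tendsto_norm_cocompact_atTop.comp tendsto_comap)).const_mul_atTop (ha j)
  refine tendsto_atTop_mono (fun z => ?_) hj
  exact Finset.single_le_sum (f := fun i => a i * ‖z i‖ ^ 2)
    (fun i _ => mul_nonneg (ha i).le (sq_nonneg _)) (Finset.mem_univ j)

section MomentMap

variable {ι E : Type*} [Fintype ι] [NormedAddCommGroup E]

noncomputable def momentMap [NormedSpace ℝ E] (γ : ι → E) (c : E) (z : ι → ℂ) : E :=
  c + (1 / 2 : ℝ) • ∑ j, (‖z j‖ ^ 2) • γ j

theorem continuous_momentMap [NormedSpace ℝ E] (γ : ι → E) (c : E) :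
    Continuous (momentMap γ c) := by
  unfold momentMap
  fun_prop

theorem momentMap_smul [NormedSpace ℝ E] (γ : ι → E) (c : E) (r : ℝ) (z : ι → ℂ) :
    momentMap γ c (r • z) = c + r ^ 2 • (momentMap γ c z - c) := by
  simp only [momentMap, add_sub_cancel_left, Pi.smul_apply, norm_smul, mul_pow,
    Real.norm_eq_abs, sq_abs, mul_smul, Finset.smul_sum]
  congr! 2 with j
  exact smul_comm _ _ _

theorem inner_momentMap [InnerProductSpace ℝ E] (γ : ι → E) (c ξ : E) (z : ι → ℂ) :
    ⟪momentMap γ c z, ξ⟫ = ⟪c, ξ⟫ + (1 / 2 : ℝ) * ∑ j, ⟪γ j, ξ⟫ * ‖z j‖ ^ 2 := by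
  simp only [momentMap, inner_add_left, real_inner_smul_left, sum_inner, mul_comm]

theorem isProperMap_momentMap_of_inner_pos [InnerProductSpace ℝ E] {γ : ι → E} (c : E) {ξ : E}
    (hξ : ∀ j, 0 < ⟪γ j, ξ⟫) : IsProperMap (momentMap γ c) := by
  refine isProperMap_of_tendsto_comp_atTop (continuous_momentMap γ c)
    (continuous_id.inner continuous_const : Continuous fun y : E => ⟪y, ξ⟫) ?_
  simp only [Function.comp_def, id, inner_momentMap]
  exact tendsto_atTop_add_const_left _ _
    ((tendsto_sum_mul_norm_sq_cocompact_atTop (F := ℂ) hξ).const_mul_atTop one_half_pos)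

theorem not_isProperMap_momentMap_of_zero_mem_convexHull [NormedSpace ℝ E] {γ : ι → E} (c : E)
    (h : (0 : E) ∈ convexHull ℝ (range γ)) : ¬ IsProperMap (momentMap γ c) := by
  obtain ⟨t, ht0, hne, hsum⟩ := exists_nonneg_ne_zero_sum_smul_eq_zero h
  set z : ι → ℂ := fun j => (Real.sqrt (t j) : ℂ)
  have hz : z ≠ 0 := by
    obtain ⟨j, hj⟩ := Function.ne_iff.1 hne
    exact Function.ne_iff.2 ⟨j, by simpa [z, Real.sqrt_eq_zero (ht0 j)] using hj⟩
  have hfiber : momentMap γ c z = c := by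
    have hnorm : ∀ j, ‖z j‖ ^ 2 = t j := fun j => by
      simp only [z, Complex.norm_real, Real.norm_eq_abs, sq_abs, Real.sq_sqrt (ht0 j)]
    simp only [momentMap, hnorm, hsum, smul_zero, add_zero]
  exact not_isProperMap_of_comp_eq_const (isClosedEmbedding_smul_left hz) (y := c) fun r => by
    rw [momentMap_smul, hfiber, sub_self, smul_zero, add_zero]

end MomentMap

theorem stmt_6_general (k n : ℕ)
    (γ : Fin n → EuclideanSpace ℝ (Fin k)) (c : EuclideanSpace ℝ (Fin k)) :
    IsProperMap
      (fun z : Fin n → ℂ => c + (1 / 2 : ℝ) • ∑ j, (‖z j‖ ^ 2) • γ j) ↔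
    ∃ ξ : EuclideanSpace ℝ (Fin k), ∀ j, 0 < ⟪γ j, ξ⟫ := by
  refine ⟨fun hproper => ?_, fun ⟨ξ, hξ⟩ => isProperMap_momentMap_of_inner_pos c hξ⟩
  by_contra hpolarized
  exact not_isProperMap_momentMap_of_zero_mem_convexHull c
    (zero_mem_convexHull_range_of_not_exists_inner_pos hpolarized) hproper

/-- Let `γ₁,…,γ_n ∈ ℝ^k` (`n ≥ 1`), `c ∈ ℝ^k`, and let
`μ : ℂ^n → ℝ^k` be `μ(z) = c + (1/2) Σ_j |z_j|² γ_j`.  Then `μ` is a proper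
map if and only if there exists `ξ ∈ ℝ^k` with `⟪γ_j, ξ⟫ > 0` for every `j`,
i.e. iff the list of weights is polarized by some `ξ`. -/
theorem stmt_6 (k n : ℕ) (hn : 1 ≤ n)
    (γ : Fin n → EuclideanSpace ℝ (Fin k)) (c : EuclideanSpace ℝ (Fin k)) :
    IsProperMap
      (fun z : Fin n → ℂ => c + (1 / 2 : ℝ) • ∑ j, (‖z j‖ ^ 2) • γ j) ↔
    ∃ ξ : EuclideanSpace ℝ (Fin k), ∀ j, 0 < ⟪γ j, ξ⟫ :=
  stmt_6_general k n γ c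
end

section
/- Let γ₁,…,γ_n ∈ ℝ^k (n ≥ 1) be polarized by ξ ∈ ℝ^k, let c ∈ ℝ^k, let ε > 0, and let ψ ∈ 𝒮(ℝ^k). Then ∫_{[0,∞)^n} ψ̂(c + Σ_{j=1}^n s_j γ_j) · Π_{j=1}^n e^{−ε s_j ⟨γ_j, ξ⟩} ds = ∫_{ℝ^k} e^{−i⟨x,c⟩} ψ(x) · Π_{j=1}^n (i⟨γ_j, x⟩ + ε⟨γ_j, ξ⟩)^{−1} dx, where both sides converge absolutely. -/
/-!
Put `b_j(x) = i⟪γ_j, x⟫ + ε⟪γ_j, ξ⟫`. The phases `e^{-i s_j ⟪γ_j, x⟫}` coming from the shift of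
`c` combine with the damping factors, so the left integrand is
`∫ e^{-i⟪x, c⟫} ψ(x) ∏_j e^{-b_j(x) s_j} dx`. Since `Re b_j(x) = ε⟪γ_j, ξ⟫ > 0` does not depend on
`x`, the joint integrand on `[0,∞)^n × ℝ^k` is dominated by `|ψ(x)| ∏_j e^{-ε s_j ⟪γ_j, ξ⟫}`,
so Fubini applies, and integrating out `s` first gives `∏_j b_j(x)⁻¹`.
-/

open MeasureTheory Set
open scoped RealInnerProductSpace

lemma volume_restrict_Ici_pi {ι : Type*} [Fintype ι] (x : ι → ℝ) :
    volume.restrict (Ici x) = Measure.pi fun i => volume.restrict (Ici (x i)) := by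
  rw [← pi_univ_Ici, volume_pi, Measure.restrict_pi_pi]

lemma integrableOn_exp_neg_mul_Ici {b : ℂ} (hb : 0 < b.re) :
    IntegrableOn (fun t : ℝ => Complex.exp (-(b * t))) (Ici 0) := by
  rw [integrableOn_Ici_iff_integrableOn_Ioi]
  simpa only [neg_mul] using integrableOn_exp_mul_complex_Ioi (a := -b) (by simpa using hb) 0

lemma integral_exp_neg_mul_Ici {b : ℂ} (hb : 0 < b.re) :
    ∫ t in Ici (0 : ℝ), Complex.exp (-(b * t)) = b⁻¹ := by
  rw [integral_Ici_eq_integral_Ioi]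
  simpa only [neg_mul, Complex.ofReal_zero, mul_zero, Complex.exp_zero, neg_div_neg_eq,
    one_div] using integral_exp_mul_complex_Ioi (a := -b) (by simpa using hb) 0

lemma integrableOn_Ici_prod_exp_neg_mul {ι : Type*} [Fintype ι] {b : ι → ℂ}
    (hb : ∀ j, 0 < (b j).re) :
    IntegrableOn (fun s : ι → ℝ => ∏ j, Complex.exp (-(b j * s j))) (Ici 0) := by
  rw [IntegrableOn, volume_restrict_Ici_pi]
  exact Integrable.fintype_prod fun j => integrableOn_exp_neg_mul_Ici (hb j)

lemma integral_Ici_prod_exp_neg_mul {ι : Type*} [Fintype ι] {b : ι → ℂ}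
    (hb : ∀ j, 0 < (b j).re) :
    ∫ s in Ici (0 : ι → ℝ), ∏ j, Complex.exp (-(b j * s j)) = ∏ j, (b j)⁻¹ := by
  rw [volume_restrict_Ici_pi,
    integral_fintype_prod_eq_prod (fun j (t : ℝ) => Complex.exp (-(b j * t)))]
  exact Finset.prod_congr rfl fun j _ => integral_exp_neg_mul_Ici (hb j)

section Laplace

variable {ι E : Type*} [Fintype ι] {g : E → ℂ} {b : E → ι → ℂ} {a : ι → ℝ}

lemma norm_prod_exp_neg_mul (hre : ∀ x j, (b x j).re = a j) (x : E) (s : ι → ℝ) :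
    ‖∏ j, Complex.exp (-(b x j * s j))‖ = ‖∏ j, Complex.exp (-((a j : ℂ) * s j))‖ := by
  simp only [norm_prod, Complex.norm_exp, Complex.neg_re, Complex.re_mul_ofReal, hre,
    Complex.ofReal_re]

variable [MeasurableSpace E] {μ : Measure E}

lemma integrable_mul_prod_exp_neg_mul (hg : Integrable g μ) (hb : Measurable b)
    (ha : ∀ j, 0 < a j) (hre : ∀ x j, (b x j).re = a j) :
    Integrable (fun p : (ι → ℝ) × E => g p.2 * ∏ j, Complex.exp (-(b p.2 j * p.1 j)))
      ((volume.restrict (Ici 0)).prod μ) := by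
  have hdom := (integrableOn_Ici_prod_exp_neg_mul (b := fun j => (a j : ℂ))
    (by simpa using ha)).norm.mul_prod hg.norm
  refine hdom.mono' ?_ (ae_of_all _ fun p => ?_)
  · refine hg.aestronglyMeasurable.comp_snd.mul (Measurable.aestronglyMeasurable ?_)
    fun_prop
  · rw [norm_mul, norm_prod_exp_neg_mul hre, mul_comm]

variable [SigmaFinite μ]

theorem integral_Ici_integral_mul_prod_exp_neg_mul (hg : Integrable g μ) (hb : Measurable b)
    (ha : ∀ j, 0 < a j) (hre : ∀ x j, (b x j).re = a j) :
    IntegrableOn (fun s : ι → ℝ => ∫ x, g x * ∏ j, Complex.exp (-(b x j * s j)) ∂μ) (Ici 0) ∧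
    Integrable (fun x => g x * ∏ j, (b x j)⁻¹) μ ∧
    ∫ s in Ici (0 : ι → ℝ), ∫ x, g x * ∏ j, Complex.exp (-(b x j * s j)) ∂μ =
      ∫ x, g x * ∏ j, (b x j)⁻¹ ∂μ := by
  have hF := integrable_mul_prod_exp_neg_mul hg hb ha hre
  have hb_re : ∀ x j, 0 < (b x j).re := fun x j => hre x j ▸ ha j
  have hinner : ∀ x, ∫ s in Ici (0 : ι → ℝ), g x * ∏ j, Complex.exp (-(b x j * s j)) =
      g x * ∏ j, (b x j)⁻¹ := fun x => by
    rw [integral_const_mul, integral_Ici_prod_exp_neg_mul (hb_re x)]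
  refine ⟨hF.integral_prod_left, ?_, ?_⟩
  · simpa only [hinner] using hF.integral_prod_right
  · rw [integral_integral_swap hF]
    simp only [hinner]

end Laplace

lemma exp_neg_I_inner_add_sum_smul {ι E : Type*} [Fintype ι] [NormedAddCommGroup E]
    [InnerProductSpace ℝ E] (x c : E) (s : ι → ℝ) (γ : ι → E) :
    Complex.exp (-Complex.I * (⟪x, c + ∑ j, s j • γ j⟫ : ℂ)) =
      Complex.exp (-Complex.I * (⟪x, c⟫ : ℂ)) *
        ∏ j, Complex.exp (-(Complex.I * (⟪γ j, x⟫ : ℂ) * s j)) := by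
  simp only [inner_add_right, inner_sum, real_inner_smul_right, real_inner_comm x]
  rw [← Complex.exp_sum, ← Complex.exp_add]
  push_cast
  rw [mul_add, Finset.mul_sum]
  congr 2
  exact Finset.sum_congr rfl fun j _ => by ring

theorem stmt_7_general (k n : ℕ)
    (γ : Fin n → EuclideanSpace ℝ (Fin k)) (ξ : EuclideanSpace ℝ (Fin k))
    (hpol : ∀ j, 0 < ⟪γ j, ξ⟫) (c : EuclideanSpace ℝ (Fin k))
    (ε : ℝ) (hε : 0 < ε)
    (ψ : SchwartzMap (EuclideanSpace ℝ (Fin k)) ℂ) :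
    IntegrableOn
      (fun s : Fin n → ℝ =>
        (∫ x : EuclideanSpace ℝ (Fin k),
            Complex.exp (-Complex.I * (⟪x, c + ∑ j, s j • γ j⟫ : ℂ)) * ψ x) *
          ∏ j, Complex.exp (-(((ε * s j * ⟪γ j, ξ⟫) : ℝ) : ℂ)))
      (Set.Ici (0 : Fin n → ℝ)) volume ∧
    Integrable
      (fun x : EuclideanSpace ℝ (Fin k) =>
        Complex.exp (-Complex.I * (⟪x, c⟫ : ℂ)) * ψ x *
          ∏ j, (Complex.I * (⟪γ j, x⟫ : ℂ) + ((ε * ⟪γ j, ξ⟫ : ℝ) : ℂ))⁻¹)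
      volume ∧
    ∫ s in Set.Ici (0 : Fin n → ℝ),
        (∫ x : EuclideanSpace ℝ (Fin k),
            Complex.exp (-Complex.I * (⟪x, c + ∑ j, s j • γ j⟫ : ℂ)) * ψ x) *
          ∏ j, Complex.exp (-(((ε * s j * ⟪γ j, ξ⟫) : ℝ) : ℂ)) =
      ∫ x : EuclideanSpace ℝ (Fin k),
        Complex.exp (-Complex.I * (⟪x, c⟫ : ℂ)) * ψ x *
          ∏ j, (Complex.I * (⟪γ j, x⟫ : ℂ) + ((ε * ⟪γ j, ξ⟫ : ℝ) : ℂ))⁻¹ := by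
  set b : EuclideanSpace ℝ (Fin k) → Fin n → ℂ :=
    fun x j => Complex.I * (⟪γ j, x⟫ : ℂ) + ((ε * ⟪γ j, ξ⟫ : ℝ) : ℂ)
  have hb_meas : Measurable b := by fun_prop
  have hb_re : ∀ x j, (b x j).re = ε * ⟪γ j, ξ⟫ := fun x j => by simp [b]
  have hg : Integrable (fun x => Complex.exp (-Complex.I * (⟪x, c⟫ : ℂ)) * ψ x) := by
    refine ψ.integrable.bdd_mul (c := 1) (by fun_prop) (ae_of_all _ fun x => ?_)
    simp [Complex.norm_exp]
  have hlhs : ∀ s : Fin n → ℝ,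
      (∫ x, Complex.exp (-Complex.I * (⟪x, c + ∑ j, s j • γ j⟫ : ℂ)) * ψ x) *
          ∏ j, Complex.exp (-(((ε * s j * ⟪γ j, ξ⟫) : ℝ) : ℂ)) =
        ∫ x, Complex.exp (-Complex.I * (⟪x, c⟫ : ℂ)) * ψ x *
          ∏ j, Complex.exp (-(b x j * s j)) := fun s => by
    rw [← integral_mul_const]
    refine integral_congr_ae (ae_of_all _ fun x => ?_)
    dsimp only
    have hfactor : ∀ j, Complex.exp (-(Complex.I * (⟪γ j, x⟫ : ℂ) * s j)) *
        Complex.exp (-(((ε * s j * ⟪γ j, ξ⟫) : ℝ) : ℂ)) = Complex.exp (-(b x j * s j)) :=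
      fun j => by rw [← Complex.exp_add]; push_cast [b]; ring_nf
    rw [exp_neg_I_inner_add_sum_smul, ← Finset.prod_congr rfl fun j _ => hfactor j,
      Finset.prod_mul_distrib]
    ring
  simp only [hlhs]
  exact integral_Ici_integral_mul_prod_exp_neg_mul hg hb_meas
    (fun j => mul_pos hε (hpol j)) hb_re

/-- Let `γ₁,…,γ_n ∈ ℝ^k` (`n ≥ 1`) be polarized by `ξ`, let
`c ∈ ℝ^k`, `ε > 0`, and `ψ ∈ 𝒮(ℝ^k)`.  With `ψ̂(t) = ∫ e^{−i⟪x,t⟫} ψ(x) dx`,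
`∫_{[0,∞)^n} ψ̂(c + Σ_j s_j γ_j) Π_j e^{−ε s_j ⟪γ_j,ξ⟫} ds
  = ∫_{ℝ^k} e^{−i⟪x,c⟫} ψ(x) Π_j (i⟪γ_j,x⟫ + ε⟪γ_j,ξ⟫)⁻¹ dx`,
and both sides converge absolutely. -/
theorem stmt_7 (k n : ℕ) (hn : 1 ≤ n)
    (γ : Fin n → EuclideanSpace ℝ (Fin k)) (ξ : EuclideanSpace ℝ (Fin k))
    (hpol : ∀ j, 0 < ⟪γ j, ξ⟫) (c : EuclideanSpace ℝ (Fin k))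
    (ε : ℝ) (hε : 0 < ε)
    (ψ : SchwartzMap (EuclideanSpace ℝ (Fin k)) ℂ) :
    IntegrableOn
      (fun s : Fin n → ℝ =>
        (∫ x : EuclideanSpace ℝ (Fin k),
            Complex.exp (-Complex.I * (⟪x, c + ∑ j, s j • γ j⟫ : ℂ)) * ψ x) *
          ∏ j, Complex.exp (-(((ε * s j * ⟪γ j, ξ⟫) : ℝ) : ℂ)))
      (Set.Ici (0 : Fin n → ℝ)) volume ∧
    Integrable
      (fun x : EuclideanSpace ℝ (Fin k) =>
        Complex.exp (-Complex.I * (⟪x, c⟫ : ℂ)) * ψ x *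
          ∏ j, (Complex.I * (⟪γ j, x⟫ : ℂ) + ((ε * ⟪γ j, ξ⟫ : ℝ) : ℂ))⁻¹)
      volume ∧
    ∫ s in Set.Ici (0 : Fin n → ℝ),
        (∫ x : EuclideanSpace ℝ (Fin k),
            Complex.exp (-Complex.I * (⟪x, c + ∑ j, s j • γ j⟫ : ℂ)) * ψ x) *
          ∏ j, Complex.exp (-(((ε * s j * ⟪γ j, ξ⟫) : ℝ) : ℂ)) =
      ∫ x : EuclideanSpace ℝ (Fin k),
        Complex.exp (-Complex.I * (⟪x, c⟫ : ℂ)) * ψ x *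
          ∏ j, (Complex.I * (⟪γ j, x⟫ : ℂ) + ((ε * ⟪γ j, ξ⟫ : ℝ) : ℂ))⁻¹ :=
  stmt_7_general k n γ ξ hpol c ε hε ψ
end

section
/- Let γ₁,…,γ_n ∈ ℝ^k (n ≥ 1) be polarized by ξ ∈ ℝ^k, let c ∈ ℝ^k, and let ψ ∈ 𝒮(ℝ^k). Then ∫_{[0,∞)^n} ψ̂(c + Σ_{j=1}^n s_j γ_j) ds = lim_{ε→0⁺} ∫_{ℝ^k} e^{−i⟨x,c⟩} ψ(x) · Π_{j=1}^n (i⟨γ_j, x⟩ + ε⟨γ_j, ξ⟩)^{−1} dx; in particular the limit on the right exists. This is the rigorous form of the statement that the Fourier transform of the tempered function x ↦ e^{i⟨c,x⟩}/Π_j ⟨γ_j, x⟩ (with each factor 1/⟨γ_j,·⟩ interpreted as the boundary value 1/(⟨γ_j,·⟩ + i0)) equals, up to the constant (2πi)^n, the cone distribution δ_c ∗ h_{γ₁} ∗ ⋯ ∗ h_{γ_n}. -/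
/-!
For `ε > 0` each factor `(i⟪γⱼ, x⟫ + ε⟪γⱼ, ξ⟫)⁻¹` is the Laplace integral
`∫₀^∞ exp (-s (i⟪γⱼ, x⟫ + ε⟪γⱼ, ξ⟫)) ds`, so Fubini turns the `x`-integral into
`∫_{[0,∞)ⁿ} exp (-ε ∑ sⱼ⟪γⱼ, ξ⟫) ψ̂(c + ∑ sⱼγⱼ) ds`. Pairing with `ξ` shows that on the orthant
`‖s‖` grows at most linearly in `‖c + ∑ sⱼγⱼ‖`, so the rapid decay of the Schwartz function `ψ̂`
makes `s ↦ ψ̂(c + ∑ sⱼγⱼ)` integrable there, and dominated convergence lets `ε → 0⁺`.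
-/

open MeasureTheory Set Filter Topology
open scoped RealInnerProductSpace

open Complex FourierTransform

section Orthant

variable {ι : Type*} [Fintype ι]

theorem volume_restrict_Ici_zero_eq_pi :
    (volume : Measure (ι → ℝ)).restrict (Ici 0) = Measure.pi fun _ => volume.restrict (Ici 0) := by
  rw [volume_pi, ← Measure.restrict_pi_pi, Set.pi_univ_Ici]
  rfl

theorem integral_exp_neg_mul_Ioi {z : ℂ} (hz : 0 < z.re) :
    ∫ s in Ioi (0 : ℝ), cexp (-z * s) = z⁻¹ := by
  rw [integral_exp_mul_complex_Ioi (by simpa using hz)]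
  simp

theorem exp_neg_sum_mul_eq_prod (z : ι → ℂ) (s : ι → ℝ) :
    cexp (-∑ j, z j * s j) = ∏ j, cexp (-z j * s j) := by
  simp only [← Finset.sum_neg_distrib, Complex.exp_sum, neg_mul]

theorem integrableOn_Ici_exp_neg_sum_mul {z : ι → ℂ} (hz : ∀ j, 0 < (z j).re) :
    IntegrableOn (fun s : ι → ℝ => cexp (-∑ j, z j * s j)) (Ici 0) := by
  simp only [IntegrableOn, exp_neg_sum_mul_eq_prod, volume_restrict_Ici_zero_eq_pi]
  exact Integrable.fintype_prod (f := fun j (u : ℝ) => cexp (-z j * u)) fun j =>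
    (integrableOn_Ici_iff_integrableOn_Ioi).2
      (integrableOn_exp_mul_complex_Ioi (by simpa using hz j) 0)

theorem integral_Ici_exp_neg_sum_mul {z : ι → ℂ} (hz : ∀ j, 0 < (z j).re) :
    ∫ s in Ici (0 : ι → ℝ), cexp (-∑ j, z j * s j) = ∏ j, (z j)⁻¹ := by
  simp only [exp_neg_sum_mul_eq_prod, volume_restrict_Ici_zero_eq_pi]
  rw [integral_fintype_prod_eq_prod (fun j (u : ℝ) => cexp (-z j * u))]
  simp only [integral_Ici_eq_integral_Ioi, integral_exp_neg_mul_Ioi (hz _)]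

end Orthant

theorem tendsto_integral_exp_neg_mul_mul {X : Type*} [MeasurableSpace X] {μ : Measure X}
    {F : X → ℂ} (hF : Integrable F μ) {g : X → ℝ} (hg : AEMeasurable g μ) (hg0 : 0 ≤ᵐ[μ] g) :
    Tendsto (fun ε : ℝ => ∫ s, cexp (-((ε * g s : ℝ) : ℂ)) * F s ∂μ) (𝓝[≥] 0)
      (𝓝 (∫ s, F s ∂μ)) := by
  refine tendsto_integral_filter_of_dominated_convergence (fun s => ‖F s‖) ?_ ?_ hF.norm ?_
  · refine Eventually.of_forall fun ε => AEStronglyMeasurable.mul ?_ hF.1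
    exact (measurable_ofReal.comp_aemeasurable (hg.const_mul ε)).neg.cexp.aestronglyMeasurable
  · filter_upwards [self_mem_nhdsWithin] with ε (hε : 0 ≤ ε)
    filter_upwards [hg0] with s hs
    rw [norm_mul, ← ofReal_neg, norm_exp_ofReal]
    exact mul_le_of_le_one_left (norm_nonneg _)
      (Real.exp_le_one_iff.2 (neg_nonpos.2 (mul_nonneg hε hs)))
  · refine Eventually.of_forall fun s => ?_
    have hcont : Continuous fun ε : ℝ => cexp (-((ε * g s : ℝ) : ℂ)) * F s := by fun_prop
    simpa using (hcont.tendsto 0).mono_left nhdsWithin_le_nhds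

section InnerProductSpace

variable {ι E : Type*} [Fintype ι] [NormedAddCommGroup E] [InnerProductSpace ℝ E]

theorem norm_le_of_nonneg_of_polarized {γ : ι → E} {ξ : E} (hpol : ∀ j, 0 < ⟪γ j, ξ⟫)
    {s : ι → ℝ} (hs : 0 ≤ s) :
    ‖s‖ ≤ (∑ j, ⟪γ j, ξ⟫⁻¹) * ‖ξ‖ * ‖∑ j, s j • γ j‖ := by
  have hM : 0 ≤ ∑ j, ⟪γ j, ξ⟫⁻¹ := Finset.sum_nonneg fun j _ => (inv_pos.2 (hpol j)).le
  refine (pi_norm_le_iff_of_nonneg (by positivity)).2 fun j => ?_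
  have hcoord : s j * ⟪γ j, ξ⟫ ≤ ‖ξ‖ * ‖∑ i, s i • γ i‖ :=
    calc s j * ⟪γ j, ξ⟫ ≤ ∑ i, s i * ⟪γ i, ξ⟫ :=
          Finset.single_le_sum (f := fun i => s i * ⟪γ i, ξ⟫)
            (fun i _ => mul_nonneg (hs i) (hpol i).le) (Finset.mem_univ j)
      _ = ⟪∑ i, s i • γ i, ξ⟫ := by simp only [sum_inner, real_inner_smul_left]
      _ ≤ ‖ξ‖ * ‖∑ i, s i • γ i‖ := by rw [mul_comm]; exact real_inner_le_norm _ _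
  calc ‖s j‖ = s j * ⟪γ j, ξ⟫ * ⟪γ j, ξ⟫⁻¹ := by
        rw [Real.norm_of_nonneg (hs j), mul_inv_cancel_right₀ (hpol j).ne']
    _ ≤ ‖ξ‖ * ‖∑ i, s i • γ i‖ * ⟪γ j, ξ⟫⁻¹ :=
        mul_le_mul_of_nonneg_right hcoord (inv_pos.2 (hpol j)).le
    _ ≤ (∑ i, ⟪γ i, ξ⟫⁻¹) * ‖ξ‖ * ‖∑ i, s i • γ i‖ := by
        rw [mul_comm, mul_assoc]
        exact mul_le_mul_of_nonneg_right
          (Finset.single_le_sum (f := fun i => ⟪γ i, ξ⟫⁻¹)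
            (fun i _ => (inv_pos.2 (hpol i)).le) (Finset.mem_univ j)) (by positivity)

theorem exists_one_add_norm_le_of_polarized {γ : ι → E} {ξ : E} (hpol : ∀ j, 0 < ⟪γ j, ξ⟫)
    (c : E) : ∃ K, 0 ≤ K ∧ ∀ s : ι → ℝ, 0 ≤ s → 1 + ‖s‖ ≤ K * (1 + ‖c + ∑ j, s j • γ j‖) := by
  set A := (∑ j, ⟪γ j, ξ⟫⁻¹) * ‖ξ‖
  have hA : 0 ≤ A :=
    mul_nonneg (Finset.sum_nonneg fun j _ => (inv_pos.2 (hpol j)).le) (norm_nonneg _)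
  refine ⟨1 + A * (1 + ‖c‖), by positivity, fun s hs => ?_⟩
  have hs := norm_le_of_nonneg_of_polarized hpol hs
  have htri : ‖∑ j, s j • γ j‖ ≤ ‖c + ∑ j, s j • γ j‖ + ‖c‖ := by
    simpa using norm_sub_le (c + ∑ j, s j • γ j) c
  have ht := norm_nonneg (c + ∑ j, s j • γ j)
  nlinarith [mul_le_mul_of_nonneg_left htri hA, mul_nonneg hA ht,
    mul_nonneg (mul_nonneg hA (norm_nonneg c)) ht]

theorem SchwartzMap.exists_one_add_norm_pow_mul_le {V : Type*} [NormedAddCommGroup V]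
    [NormedSpace ℝ V] (φ : SchwartzMap E V) (N : ℕ) : ∃ C, ∀ u, (1 + ‖u‖) ^ N * ‖φ u‖ ≤ C :=
  ⟨_, fun u => by
    simpa using SchwartzMap.one_add_le_sup_seminorm_apply (𝕜 := ℝ) (m := (N, 0)) le_rfl le_rfl φ u⟩

theorem SchwartzMap.integrableOn_Ici_comp_polarized {V : Type*} [NormedAddCommGroup V]
    [NormedSpace ℝ V] (φ : SchwartzMap E V) {γ : ι → E} {ξ : E} (hpol : ∀ j, 0 < ⟪γ j, ξ⟫)
    (c : E) : IntegrableOn (fun s : ι → ℝ => φ (c + ∑ j, s j • γ j)) (Ici 0) := by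
  obtain ⟨K, hK, hcone⟩ := exists_one_add_norm_le_of_polarized hpol c
  set N := Fintype.card ι + 1
  obtain ⟨C, hC⟩ := φ.exists_one_add_norm_pow_mul_le N
  have hdecay : Integrable (fun s : ι → ℝ => (1 + ‖s‖) ^ (-(N : ℝ))) :=
    integrable_one_add_norm (by simp [N])
  refine Integrable.mono' (hdecay.const_mul (K ^ N * C)).integrableOn
    (by fun_prop : Continuous _).aestronglyMeasurable ?_
  rw [ae_restrict_iff' measurableSet_Ici]
  refine Eventually.of_forall fun s hs => ?_
  have hpos : 0 < (1 + ‖s‖) ^ N := by positivity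
  rw [Real.rpow_neg (by positivity), Real.rpow_natCast, ← div_eq_mul_inv, le_div_iff₀' hpos]
  calc (1 + ‖s‖) ^ N * ‖φ (c + ∑ j, s j • γ j)‖
      ≤ (K * (1 + ‖c + ∑ j, s j • γ j‖)) ^ N * ‖φ (c + ∑ j, s j • γ j)‖ := by
        gcongr
        exact hcone s hs
    _ = K ^ N * ((1 + ‖c + ∑ j, s j • γ j‖) ^ N * ‖φ (c + ∑ j, s j • γ j)‖) := by
        rw [mul_pow, mul_assoc]
    _ ≤ K ^ N * C := by gcongr; exact hC _

theorem integral_exp_neg_I_inner_mul_eq_fourier [FiniteDimensional ℝ E] [MeasurableSpace E]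
    [BorelSpace E] (f : E → ℂ) (t : E) :
    ∫ x, cexp (-I * ⟪x, t⟫) * f x = 𝓕 f ((2 * Real.pi)⁻¹ • t) := by
  rw [Real.fourier_eq']
  congr 1 with x
  rw [real_inner_smul_right, smul_eq_mul]
  congr 2
  push_cast
  field_simp

theorem exp_neg_I_inner_mul_exp_neg_sum (x c : E) (γ : ι → E) (a s : ι → ℝ) :
    cexp (-I * ⟪x, c⟫) * cexp (-∑ j, (I * ⟪γ j, x⟫ + a j) * s j)
      = cexp (-∑ j, (a j : ℂ) * s j) * cexp (-I * ⟪x, c + ∑ j, s j • γ j⟫) := by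
  have hsum : ∑ j, (I * ⟪γ j, x⟫ + a j) * s j
      = I * ((∑ j, s j * ⟪x, γ j⟫ : ℝ) : ℂ) + ∑ j, (a j : ℂ) * s j := by
    push_cast
    rw [Finset.mul_sum, ← Finset.sum_add_distrib]
    exact Finset.sum_congr rfl fun j _ => by rw [real_inner_comm]; ring
  rw [← Complex.exp_add, ← Complex.exp_add, hsum, inner_add_right, inner_sum]
  simp only [real_inner_smul_right]
  push_cast
  ring_nf

theorem integral_mul_prod_inv_eq_integral_Ici [MeasurableSpace E] [OpensMeasurableSpace E]
    {μ : Measure E} [SFinite μ]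
    {f : E → ℂ} (hf : Integrable f μ) (γ : ι → E) (c : E) {a : ι → ℝ} (ha : ∀ j, 0 < a j) :
    ∫ x, cexp (-I * ⟪x, c⟫) * f x * ∏ j, (I * ⟪γ j, x⟫ + a j)⁻¹ ∂μ
      = ∫ s in Ici (0 : ι → ℝ), cexp (-∑ j, (a j : ℂ) * s j) *
          ∫ x, cexp (-I * ⟪x, c + ∑ j, s j • γ j⟫) * f x ∂μ := by
  have hre : ∀ x j, 0 < (I * ⟪γ j, x⟫ + a j).re := fun x j => by simpa using ha j
  have hexp := integrableOn_Ici_exp_neg_sum_mul (z := fun j => (a j : ℂ)) (by simpa using ha)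
  have hint : Integrable (Function.uncurry fun x (s : ι → ℝ) =>
      cexp (-∑ j, (a j : ℂ) * s j) * (cexp (-I * ⟪x, c + ∑ j, s j • γ j⟫) * f x))
      (μ.prod (volume.restrict (Ici 0))) := by
    refine (hf.mul_prod hexp).mono ?_ (Eventually.of_forall fun p => ?_)
    · exact (by fun_prop : Continuous _).aestronglyMeasurable.mul
        ((by fun_prop : Continuous _).aestronglyMeasurable.mul hf.1.comp_fst)
    · rw [Function.uncurry_apply_pair, norm_mul, norm_mul, norm_mul, Complex.norm_exp (-I * _)]
      simp [mul_comm]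
  calc ∫ x, cexp (-I * ⟪x, c⟫) * f x * ∏ j, (I * ⟪γ j, x⟫ + a j)⁻¹ ∂μ
      = ∫ x, (∫ s in Ici (0 : ι → ℝ), cexp (-∑ j, (a j : ℂ) * s j) *
          (cexp (-I * ⟪x, c + ∑ j, s j • γ j⟫) * f x)) ∂μ := by
        congr 1 with x
        rw [← integral_Ici_exp_neg_sum_mul (hre x), ← integral_const_mul]
        congr 1 with s
        rw [mul_right_comm, exp_neg_I_inner_mul_exp_neg_sum, mul_assoc]
    _ = _ := by
        rw [integral_integral_swap hint]
        simp only [integral_const_mul]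

end InnerProductSpace

theorem stmt_8_general (k n : ℕ)
    (γ : Fin n → EuclideanSpace ℝ (Fin k)) (ξ : EuclideanSpace ℝ (Fin k))
    (hpol : ∀ j, 0 < ⟪γ j, ξ⟫) (c : EuclideanSpace ℝ (Fin k))
    (ψ : SchwartzMap (EuclideanSpace ℝ (Fin k)) ℂ) :
    Tendsto
      (fun ε : ℝ =>
        ∫ x : EuclideanSpace ℝ (Fin k),
          Complex.exp (-Complex.I * (⟪x, c⟫ : ℂ)) * ψ x *
            ∏ j, (Complex.I * (⟪γ j, x⟫ : ℂ) + ((ε * ⟪γ j, ξ⟫ : ℝ) : ℂ))⁻¹)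
      (𝓝[>] (0 : ℝ))
      (𝓝 (∫ s in Set.Ici (0 : Fin n → ℝ),
        ∫ x : EuclideanSpace ℝ (Fin k),
          Complex.exp (-Complex.I * (⟪x, c + ∑ j, s j • γ j⟫ : ℂ)) * ψ x)) := by
  set F : (Fin n → ℝ) → ℂ := fun s => ∫ x, cexp (-I * ⟪x, c + ∑ j, s j • γ j⟫) * ψ x
  have hF : IntegrableOn F (Ici 0) := by
    -- `F s = 𝓕 ψ ((2π)⁻¹ • c + ∑ j, s j • (2π)⁻¹ • γ j)`, and the rescaled cone is still polarized
    have hpol' : ∀ j, 0 < ⟪(2 * Real.pi)⁻¹ • γ j, ξ⟫ := fun j => by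
      rw [real_inner_smul_left]
      exact mul_pos (by positivity) (hpol j)
    refine ((𝓕 ψ).integrableOn_Ici_comp_polarized hpol' ((2 * Real.pi)⁻¹ • c)).congr_fun
      (fun s _ => ?_) measurableSet_Ici
    simp only [F, integral_exp_neg_I_inner_mul_eq_fourier, smul_add, Finset.smul_sum,
      smul_comm _ (s _)]
    rfl
  have hg0 : 0 ≤ᵐ[volume.restrict (Ici 0)] fun s : Fin n → ℝ => ∑ j, ⟪γ j, ξ⟫ * s j := by
    filter_upwards [ae_restrict_mem measurableSet_Ici] with s hs
    exact Finset.sum_nonneg fun j _ => mul_nonneg (hpol j).le (hs j)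
  have hlim := tendsto_integral_exp_neg_mul_mul hF
    (by fun_prop : Measurable fun s : Fin n → ℝ => ∑ j, ⟪γ j, ξ⟫ * s j).aemeasurable hg0
  refine (hlim.mono_left (nhdsWithin_mono _ Ioi_subset_Ici_self)).congr' ?_
  filter_upwards [self_mem_nhdsWithin] with ε (hε : 0 < ε)
  rw [integral_mul_prod_inv_eq_integral_Ici ψ.integrable γ c (a := fun j => ε * ⟪γ j, ξ⟫)
    fun j => mul_pos hε (hpol j)]
  congr 1 with s
  congr 2
  push_cast
  rw [Finset.mul_sum]
  simp only [mul_assoc]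

/-- Let `γ₁,…,γ_n ∈ ℝ^k` (`n ≥ 1`) be polarized by `ξ`, let
`c ∈ ℝ^k` and `ψ ∈ 𝒮(ℝ^k)`.  With `ψ̂(t) = ∫ e^{−i⟪x,t⟫} ψ(x) dx`,
`∫_{[0,∞)^n} ψ̂(c + Σ_j s_j γ_j) ds
  = lim_{ε→0⁺} ∫_{ℝ^k} e^{−i⟪x,c⟫} ψ(x) Π_j (i⟪γ_j,x⟫ + ε⟪γ_j,ξ⟫)⁻¹ dx`;
in particular the limit on the right exists.  (This is the rigorous form of
the statement that the Fourier transform of `x ↦ e^{i⟪c,x⟫}/Π_j ⟪γ_j,x⟫`,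
with each factor interpreted as the boundary value `1/(⟪γ_j,·⟫ + i0)`,
equals up to the constant `(2πi)^n` the cone distribution
`δ_c ∗ h_{γ₁} ∗ ⋯ ∗ h_{γ_n}`.) -/
theorem stmt_8 (k n : ℕ) (hn : 1 ≤ n)
    (γ : Fin n → EuclideanSpace ℝ (Fin k)) (ξ : EuclideanSpace ℝ (Fin k))
    (hpol : ∀ j, 0 < ⟪γ j, ξ⟫) (c : EuclideanSpace ℝ (Fin k))
    (ψ : SchwartzMap (EuclideanSpace ℝ (Fin k)) ℂ) :
    Tendsto
      (fun ε : ℝ =>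
        ∫ x : EuclideanSpace ℝ (Fin k),
          Complex.exp (-Complex.I * (⟪x, c⟫ : ℂ)) * ψ x *
            ∏ j, (Complex.I * (⟪γ j, x⟫ : ℂ) + ((ε * ⟪γ j, ξ⟫ : ℝ) : ℂ))⁻¹)
      (𝓝[>] (0 : ℝ))
      (𝓝 (∫ s in Set.Ici (0 : Fin n → ℝ),
        ∫ x : EuclideanSpace ℝ (Fin k),
          Complex.exp (-Complex.I * (⟪x, c + ∑ j, s j • γ j⟫ : ℂ)) * ψ x)) :=
  stmt_8_general k n γ ξ hpol c ψ
end
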